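/- Under the Volterra equation hypotheses with H*(n) → ∞ and λ := lim H*₋(n)/H*₊(n) ∈ (0,∞), one has x*₊(n) → ∞, x*₋(n) → ∞, lim x*₊(n)/H*₊(n) = 1 and lim x*₋(n)/H*₋(n) = 1, where x*₊(n) = max_{0≤j≤n} x(j), x*₋(n) = max_{0≤j≤n}(−x(j)). -/

import Mathlib

open Filter Finset Topology

/-- Running maximum of `g` over `{1,…,n}` (value `0` when `n = 0`). -/
noncomputable def runMax1 (g : ℕ → ℝ) (n : ℕ) : ℝ :=
  if h : 1 ≤ n then (Finset.Icc 1 n).sup' (Finset.nonempty_Icc.mpr h) g else 0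

/-- Running maximum of `g` over `{0,…,n}`. -/
noncomputable def runMax0 (g : ℕ → ℝ) (n : ℕ) : ℝ :=
  (Finset.Icc 0 n).sup' (Finset.nonempty_Icc.mpr (Nat.zero_le n)) g

/-!
The forcing term dominates the memory term. Sublinearity of `f` gives, for every `ε > 0`,
`|f y| ≤ ε |y| + B`, and summability of `k` turns this into
`|x (n+1) - H (n+1)| ≤ (∑ |k|) (ε max_{j ≤ n} |x j| + B)`. With `ε` small this first bounds
`max_{j ≤ n} |x j|` by `2 H*(n) + C`, and then shows `|x n - H n| ≤ ε H*(n) + D_ε` for every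
`ε > 0`. Running maxima are `1`-Lipschitz for the sup distance, so `x*₊ - H*₊` and
`x*₋ - H*₋` obey the same bound. Since `H*₋ / H*₊ → λ ∈ (0, ∞)`, both `H*₊` and `H*₋` are
comparable to `H* → ∞`, hence `x*₊ ~ H*₊` and `x*₋ ~ H*₋`.
-/

open Asymptotics

theorem exists_abs_le_mul_abs_add_of_continuous {f : ℝ → ℝ} (hf : Continuous f)
    (hsub : Tendsto (fun y => f y / y) (cocompact ℝ) (𝓝 0)) :
    ∀ ε > 0, ∃ B, ∀ y, |f y| ≤ ε * |y| + B := by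
  intro ε hε
  obtain ⟨K, hK, hKs⟩ := mem_cocompact.mp (hsub (Metric.ball_mem_nhds 0 hε))
  obtain ⟨B, hB⟩ := (hK.insert 0).exists_bound_of_continuousOn hf.continuousOn
  have hB0 : 0 ≤ B := (norm_nonneg _).trans (hB 0 (Set.mem_insert 0 K))
  refine ⟨B, fun y => ?_⟩
  have hεy : 0 ≤ ε * |y| := by positivity
  by_cases hy : y ∈ insert 0 K
  · have := hB y hy
    rw [Real.norm_eq_abs] at this
    linarith
  · rw [Set.mem_insert_iff, not_or] at hy
    have hlt : |f y| / |y| < ε := by simpa using hKs hy.2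
    rw [div_lt_iff₀ (abs_pos.2 hy.1)] at hlt
    linarith

theorem abs_sum_range_mul_le {k g : ℕ → ℝ} (hk : Summable fun j => |k j|) {n : ℕ} {M : ℝ}
    (hg : ∀ j ≤ n, |g j| ≤ M) :
    |∑ j ∈ range (n + 1), k (n - j) * g j| ≤ (∑' j, |k j|) * M := by
  have hM : 0 ≤ M := (abs_nonneg _).trans (hg 0 n.zero_le)
  calc |∑ j ∈ range (n + 1), k (n - j) * g j|
      ≤ ∑ j ∈ range (n + 1), |k (n - j)| * M := by
        refine (abs_sum_le_sum_abs _ _).trans (sum_le_sum fun j hj => ?_)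
        rw [abs_mul]
        exact mul_le_mul_of_nonneg_left (hg j (Nat.lt_succ_iff.mp (mem_range.mp hj)))
          (abs_nonneg _)
    _ = (∑ j ∈ range (n + 1), |k j|) * M := by
        rw [← sum_mul, ← sum_range_reflect (fun j => |k j|) (n + 1)]
        simp
    _ ≤ (∑' j, |k j|) * M := by
        gcongr
        exact hk.sum_le_tsum _ fun j _ => abs_nonneg _

section RunningMax

variable {g : ℕ → ℝ} {j n : ℕ}

@[simp]
theorem runMax1_zero (g : ℕ → ℝ) : runMax1 g 0 = 0 := by
  simp [runMax1]

theorem le_runMax0 (g : ℕ → ℝ) (h : j ≤ n) : g j ≤ runMax0 g n :=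
  le_sup' g (mem_Icc.mpr ⟨j.zero_le, h⟩)

theorem runMax0_le {a : ℝ} (h : ∀ j ≤ n, g j ≤ a) : runMax0 g n ≤ a :=
  sup'_le _ _ fun j hj => h j (mem_Icc.mp hj).2

theorem le_runMax1 (g : ℕ → ℝ) (h1 : 1 ≤ j) (h : j ≤ n) : g j ≤ runMax1 g n := by
  rw [runMax1, dif_pos (h1.trans h)]
  exact le_sup' g (mem_Icc.mpr ⟨h1, h⟩)

theorem runMax1_le (hn : 1 ≤ n) {a : ℝ} (h : ∀ j, 1 ≤ j → j ≤ n → g j ≤ a) :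
    runMax1 g n ≤ a := by
  rw [runMax1, dif_pos hn]
  exact sup'_le _ _ fun j hj => h j (mem_Icc.mp hj).1 (mem_Icc.mp hj).2

theorem monotone_runMax1_abs (g : ℕ → ℝ) : Monotone (runMax1 fun j => |g j|) := by
  refine monotone_nat_of_le_succ fun n => ?_
  rcases Nat.eq_zero_or_pos n with rfl | hn
  · rw [runMax1_zero]
    exact (abs_nonneg (g 1)).trans (le_runMax1 (fun j => |g j|) le_rfl le_rfl)
  · exact runMax1_le hn fun j hj1 hjn => le_runMax1 (fun j => |g j|) hj1 (hjn.trans n.le_succ)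

theorem runMax1_abs_nonneg (g : ℕ → ℝ) (n : ℕ) : 0 ≤ runMax1 (fun j => |g j|) n :=
  (runMax1_zero _).symm.trans_le (monotone_runMax1_abs g n.zero_le)

theorem runMax1_abs_le_max (g : ℕ → ℝ) (n : ℕ) :
    runMax1 (fun j => |g j|) n ≤ max (runMax1 g n) (runMax1 (fun j => -g j) n) := by
  rcases Nat.eq_zero_or_pos n with rfl | hn
  · simp
  · refine runMax1_le hn fun j hj1 hjn => ?_
    rw [abs_eq_max_neg]
    exact max_le_max (le_runMax1 g hj1 hjn) (le_runMax1 (fun j => -g j) hj1 hjn)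

theorem abs_runMax0_sub_runMax1_le {a b : ℕ → ℝ} {E : ℝ} (hn : 1 ≤ n) (hb : 0 ≤ runMax1 b n)
    (h : ∀ j, 1 ≤ j → j ≤ n → |a j - b j| ≤ E) :
    |runMax0 a n - runMax1 b n| ≤ |a 0| + E := by
  have hE : 0 ≤ E := (abs_nonneg _).trans (h 1 le_rfl hn)
  have hb_le : runMax1 b n ≤ runMax0 a n + E := runMax1_le hn fun j hj1 hjn => by
    linarith [le_runMax0 a hjn, (abs_le.mp (h j hj1 hjn)).1]
  have ha_le : runMax0 a n ≤ runMax1 b n + (|a 0| + E) := runMax0_le fun j hjn => by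
    rcases Nat.eq_zero_or_pos j with rfl | hj1
    · linarith [le_abs_self (a 0)]
    · linarith [le_runMax1 b hj1 hjn, (abs_le.mp (h j hj1 hjn)).2, abs_nonneg (a 0)]
  rw [abs_le]
  constructor <;> linarith [abs_nonneg (a 0)]

end RunningMax

section Volterra

variable {f : ℝ → ℝ} {k H x : ℕ → ℝ}

theorem abs_sub_le_of_volterra (hk : Summable fun j => |k j|)
    (hx : ∀ n : ℕ, x (n + 1) = H (n + 1) + ∑ j ∈ range (n + 1), k (n - j) * f (x j))
    {ε B : ℝ} (hε : 0 ≤ ε) (hfB : ∀ y, |f y| ≤ ε * |y| + B) (n : ℕ) :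
    |x (n + 1) - H (n + 1)| ≤ (∑' j, |k j|) * (ε * runMax0 (fun j => |x j|) n + B) := by
  rw [hx n, add_sub_cancel_left]
  refine abs_sum_range_mul_le hk fun j hj => (hfB (x j)).trans ?_
  gcongr
  exact le_runMax0 (fun j => |x j|) hj

theorem exists_runMax0_abs_le (hk : Summable fun j => |k j|)
    (hx : ∀ n : ℕ, x (n + 1) = H (n + 1) + ∑ j ∈ range (n + 1), k (n - j) * f (x j))
    (hfB : ∀ ε > 0, ∃ B, ∀ y, |f y| ≤ ε * |y| + B) :
    ∃ C, ∀ n, runMax0 (fun j => |x j|) n ≤ 2 * runMax1 (fun j => |H j|) n + C := by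
  set K := ∑' j, |k j|
  have hK : 0 ≤ K := tsum_nonneg fun j => abs_nonneg _
  obtain ⟨B, hB⟩ := hfB (1 / (2 * K + 1)) (by positivity)
  have hB0 : 0 ≤ B := by simpa using (abs_nonneg _).trans (hB 0)
  have hKε : K * (1 / (2 * K + 1)) ≤ 1 / 2 := by
    rw [mul_one_div, div_le_iff₀ (by positivity)]
    linarith
  have hmono := monotone_runMax1_abs H
  refine ⟨2 * (|x 0| + K * B), fun n => ?_⟩
  induction n with
  | zero =>
    refine runMax0_le fun j hj => ?_
    rw [Nat.le_zero.mp hj, runMax1_zero]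
    linarith [abs_nonneg (x 0), mul_nonneg hK hB0]
  | succ n ih =>
    refine runMax0_le fun j hj => ?_
    obtain hjn | rfl : j ≤ n ∨ j = n + 1 := by omega
    · linarith [le_runMax0 (fun j => |x j|) hjn, hmono n.le_succ]
    · -- the memory term costs at most half of the running maximum
      have hdev : |x (n + 1) - H (n + 1)|
          ≤ K * (1 / (2 * K + 1) * runMax0 (fun j => |x j|) n + B) :=
        abs_sub_le_of_volterra hk hx (by positivity) hB n
      have hX0 : 0 ≤ runMax0 (fun j => |x j|) n :=
        (abs_nonneg _).trans (le_runMax0 (fun j => |x j|) n.zero_le)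
      have hhalf := mul_le_mul_of_nonneg_right hKε hX0
      have hH : |H (n + 1)| ≤ runMax1 (fun j => |H j|) (n + 1) :=
        le_runMax1 (fun j => |H j|) n.succ_pos le_rfl
      linarith [abs_sub_abs_le_abs_sub (x (n + 1)) (H (n + 1)), hmono n.le_succ,
        mul_nonneg hK hB0, abs_nonneg (x 0)]

theorem exists_abs_sub_le_mul_runMax1_add (hk : Summable fun j => |k j|)
    (hx : ∀ n : ℕ, x (n + 1) = H (n + 1) + ∑ j ∈ range (n + 1), k (n - j) * f (x j))
    (hfB : ∀ ε > 0, ∃ B, ∀ y, |f y| ≤ ε * |y| + B) :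
    ∀ ε > 0, ∃ D, ∀ n, 1 ≤ n → |x n - H n| ≤ ε * runMax1 (fun j => |H j|) n + D := by
  intro ε hε
  set K := ∑' j, |k j|
  have hK : 0 ≤ K := tsum_nonneg fun j => abs_nonneg _
  obtain ⟨C, hC⟩ := exists_runMax0_abs_le hk hx hfB
  set δ := ε / (2 * K + 1)
  obtain ⟨B, hB⟩ := hfB δ (by positivity)
  have hKδ : K * δ * 2 ≤ ε := by
    rw [mul_div_assoc', div_mul_eq_mul_div, div_le_iff₀ (by positivity)]
    nlinarith
  refine ⟨K * (δ * C + B), fun n hn => ?_⟩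
  obtain ⟨m, rfl⟩ := Nat.exists_eq_add_of_le' hn
  have hs := runMax1_abs_nonneg H (m + 1)
  calc |x (m + 1) - H (m + 1)|
      ≤ K * (δ * runMax0 (fun j => |x j|) m + B) :=
        abs_sub_le_of_volterra hk hx (by positivity) hB m
    _ ≤ K * (δ * (2 * runMax1 (fun j => |H j|) (m + 1) + C) + B) := by
        gcongr
        exact (hC m).trans (by gcongr; exact monotone_runMax1_abs H m.le_succ)
    _ = K * δ * 2 * runMax1 (fun j => |H j|) (m + 1) + K * (δ * C + B) := by ring
    _ ≤ ε * runMax1 (fun j => |H j|) (m + 1) + K * (δ * C + B) := by gcongr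

end Volterra

theorem isLittleO_of_forall_abs_le_mul_add {α : Type*} {l : Filter α} {u g : α → ℝ}
    (hg : Tendsto g l atTop) (h : ∀ ε > 0, ∃ D, ∀ᶠ a in l, |u a| ≤ ε * g a + D) :
    u =o[l] g := by
  refine isLittleO_iff.2 fun c hc => ?_
  obtain ⟨D, hD⟩ := h (c / 2) (half_pos hc)
  filter_upwards [hD, hg.eventually_ge_atTop (2 * D / c), hg.eventually_ge_atTop 0]
    with a ha hgD hg0
  rw [Real.norm_eq_abs, Real.norm_eq_abs, abs_of_nonneg hg0]
  rw [div_le_iff₀ hc] at hgD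
  linarith

theorem tendsto_atTop_and_isBigO_of_le_max {α : Type*} {l : Filter α} {s p m : α → ℝ} {c : ℝ}
    (hs : Tendsto s l atTop) (hsle : ∀ᶠ a in l, s a ≤ max (p a) (m a)) (hc : 0 < c)
    (hmp : Tendsto (fun a => m a / p a) l (𝓝 c)) :
    Tendsto p l atTop ∧ s =O[l] p := by
  have hbound : ∀ᶠ a in l, 0 < s a ∧ s a ≤ (1 + 2 * c) * p a := by
    filter_upwards [hs.eventually_gt_atTop 0, hsle,
      hmp.eventually (Ioo_mem_nhds (half_lt_self hc) (by linarith : c < 2 * c))]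
      with a hs0 hsa hma
    have hp : 0 < p a := by
      by_contra! hp
      rcases div_pos_iff.1 ((half_pos hc).trans hma.1) with ⟨_, hp'⟩ | ⟨hm, hp'⟩
      · linarith
      · linarith [max_lt hp' hm]
    have hm : m a ≤ 2 * c * p a := ((div_lt_iff₀ hp).1 hma.2).le
    refine ⟨hs0, hsa.trans (max_le ?_ ?_)⟩ <;> nlinarith
  have hc' : 0 < 1 + 2 * c := by linarith
  refine ⟨tendsto_atTop_mono' l ?_ (hs.atTop_div_const hc'), IsBigO.of_bound (1 + 2 * c) ?_⟩
  · filter_upwards [hbound] with a ha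
    rw [div_le_iff₀ hc']
    linarith [ha.2]
  · filter_upwards [hbound] with a ha
    rw [Real.norm_eq_abs, Real.norm_eq_abs, abs_of_pos ha.1]
    exact ha.2.trans (by gcongr; exact le_abs_self _)

theorem isEquivalent_runMax0_runMax1 {a b s : ℕ → ℝ} (hs : Tendsto s atTop atTop)
    (hsm : Monotone s) (hdev : ∀ ε > 0, ∃ D, ∀ n, 1 ≤ n → |a n - b n| ≤ ε * s n + D)
    (hsb : s =O[atTop] runMax1 b) (hb : ∀ᶠ n in atTop, 0 ≤ runMax1 b n) :
    runMax0 a ~[atTop] runMax1 b := by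
  refine (isLittleO_of_forall_abs_le_mul_add hs fun ε hε => ?_).trans_isBigO hsb
  obtain ⟨D, hD⟩ := hdev ε hε
  refine ⟨|a 0| + D, ?_⟩
  filter_upwards [eventually_ge_atTop 1, hb] with n hn hbn
  have := abs_runMax0_sub_runMax1_le (E := ε * s n + D) hn hbn fun j hj1 hjn =>
    (hD j hj1).trans (by gcongr; exact hsm hjn)
  rw [Pi.sub_apply]
  linarith

theorem stmt15_general
(f : ℝ → ℝ) (k H x : ℕ → ℝ)
    (hf : Continuous f)
    (hsub : Filter.Tendsto (fun y => f y / y) (Filter.cocompact ℝ) (nhds 0))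
    (hk : Summable (fun j => |k j|))
    (hx : ∀ n : ℕ, x (n + 1) = H (n + 1) + ∑ j ∈ Finset.range (n + 1), k (n - j) * f (x j))
    (hH : Filter.Tendsto (fun n => runMax1 (fun j => |H j|) n) Filter.atTop Filter.atTop)
    (lam : ℝ) (hlam0 : 0 < lam)
    (hlam : Filter.Tendsto
      (fun n => runMax1 (fun j => -H j) n / runMax1 H n) Filter.atTop (nhds lam)) :
    Filter.Tendsto (fun n => runMax0 x n) Filter.atTop Filter.atTop ∧
    Filter.Tendsto (fun n => runMax0 (fun j => -x j) n) Filter.atTop Filter.atTop ∧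
    Filter.Tendsto (fun n => runMax0 x n / runMax1 H n) Filter.atTop (nhds 1) ∧
    Filter.Tendsto
      (fun n => runMax0 (fun j => -x j) n / runMax1 (fun j => -H j) n)
      Filter.atTop (nhds 1) := by
  have hdev := exists_abs_sub_le_mul_runMax1_add hk hx
    (exists_abs_le_mul_abs_add_of_continuous hf hsub)
  have hdev_neg : ∀ ε > 0, ∃ D, ∀ n, 1 ≤ n →
      |-x n - -H n| ≤ ε * runMax1 (fun j => |H j|) n + D := by
    simpa only [neg_sub_neg, abs_sub_comm] using hdev
  obtain ⟨hHp, hsp⟩ := tendsto_atTop_and_isBigO_of_le_max hH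
    (Eventually.of_forall (runMax1_abs_le_max H)) hlam0 hlam
  obtain ⟨hHm, hsm⟩ := tendsto_atTop_and_isBigO_of_le_max hH
    (Eventually.of_forall fun n => (runMax1_abs_le_max H n).trans_eq (max_comm _ _))
    (inv_pos.2 hlam0) (by simpa only [inv_div] using hlam.inv₀ hlam0.ne')
  have hxp := isEquivalent_runMax0_runMax1 hH (monotone_runMax1_abs H) hdev hsp
    (hHp.eventually_ge_atTop 0)
  have hxm := isEquivalent_runMax0_runMax1 hH (monotone_runMax1_abs H) hdev_neg hsm
    (hHm.eventually_ge_atTop 0)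
  exact ⟨hxp.symm.tendsto_atTop hHp, hxm.symm.tendsto_atTop hHm,
    (isEquivalent_iff_tendsto_one ((hHp.eventually_gt_atTop 0).mono fun _ h => h.ne')).1 hxp,
    (isEquivalent_iff_tendsto_one ((hHm.eventually_gt_atTop 0).mono fun _ h => h.ne')).1 hxm⟩

theorem stmt15
(f : ℝ → ℝ) (k H x : ℕ → ℝ) (ξ : ℝ)
    (hf : Continuous f)
    (hsub : Filter.Tendsto (fun y => f y / y) (Filter.cocompact ℝ) (nhds 0))
    (hk : Summable (fun j => |k j|))
    (hx0 : x 0 = ξ)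
    (hx : ∀ n : ℕ, x (n + 1) = H (n + 1) + ∑ j ∈ Finset.range (n + 1), k (n - j) * f (x j))
    (hH : Filter.Tendsto (fun n => runMax1 (fun j => |H j|) n) Filter.atTop Filter.atTop)
    (lam : ℝ) (hlam0 : 0 < lam)
    (hlam : Filter.Tendsto
      (fun n => runMax1 (fun j => -H j) n / runMax1 H n) Filter.atTop (nhds lam)) :
    Filter.Tendsto (fun n => runMax0 x n) Filter.atTop Filter.atTop ∧
    Filter.Tendsto (fun n => runMax0 (fun j => -x j) n) Filter.atTop Filter.atTop ∧
    Filter.Tendsto (fun n => runMax0 x n / runMax1 H n) Filter.atTop (nhds 1) ∧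
    Filter.Tendsto
      (fun n => runMax0 (fun j => -x j) n / runMax1 (fun j => -H j) n)
      Filter.atTop (nhds 1) :=
  stmt15_general f k H x hf hsub hk hx hH lam hlam0 hlam
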